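/- arXiv:1504.03192 — 2 statements merged into one kernel-verified Lean document; each statement's English description precedes it below -/
import Mathlib

section
/- For every integer d ≥ 0 there exists a constant C = C(d) > 0 such that for every prime p, all real numbers T_0, …, T_d with 1 ≤ T_i < p for each i and T_0 T_1 ⋯ T_d > p^d, and all integers a_0, …, a_d, there exists an integer t with gcd(t, p) = 1 such that ρ(a_i t) ≤ C T_i for every i = 0, …, d, where ρ(m) = min_{k ∈ ℤ} |m − kp| denotes the absolute value of the smallest (by absolute value) residue of m modulo p. -/
open Finset

theorem stmt_6 (d : ℕ) :
    ∃ C : ℝ, 0 < C ∧ ∀ p : ℕ, p.Prime →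
      ∀ T : Fin (d + 1) → ℝ, (∀ i, 1 ≤ T i ∧ T i < p) →
      (p : ℝ) ^ d < ∏ i, T i →
      ∀ a : Fin (d + 1) → ℤ,
      ∃ t : ℤ, Int.gcd t p = 1 ∧
        ∀ i, ∃ k : ℤ, ((|a i * t - k * (p : ℤ)| : ℤ) : ℝ) ≤ C * T i := by
  refine ⟨4, by norm_num, ?_⟩
  intro p hp T hT hprod a
  have hp0 : 0 < p := hp.pos
  have hp0R : (0:ℝ) < p := by exact_mod_cast hp0
  set L : Fin (d+1) → ℕ := fun i => ⌊(4:ℝ) * T i⌋₊ with hLdef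
  have hL3 : ∀ i, 3 * T i ≤ (L i : ℝ) := by
    intro i
    have h1 : (1:ℝ) ≤ T i := (hT i).1
    have h2 := Nat.sub_one_lt_floor ((4:ℝ) * T i)
    simp only [hLdef]
    linarith
  have hLle : ∀ i, (L i : ℝ) ≤ 4 * T i := fun i =>
    Nat.floor_le (by linarith [(hT i).1])
  have hLpos : ∀ i, 0 < L i := by
    intro i
    have h1 := hL3 i; have h2 := (hT i).1
    have : (0:ℝ) < (L i : ℝ) := by linarith
    exact_mod_cast this
  set N : Fin (d+1) → ℕ := fun i => p / L i + 1 with hNdef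
  have hTpos : ∀ i, (0:ℝ) < T i := fun i => by linarith [(hT i).1]
  have hNle : ∀ i, (N i : ℝ) ≤ (p : ℝ) / T i := by
    intro i
    have hT1 := (hT i).1
    have hTp := (hT i).2
    rcases lt_or_ge p (L i) with h | h
    · have h0 : p / L i = 0 := Nat.div_eq_of_lt h
      simp only [hNdef, h0]
      rw [le_div_iff₀ (hTpos i)]
      push_cast
      linarith
    · have hLR : (L i : ℝ) ≤ p := by exact_mod_cast h
      have hLposR : (0:ℝ) < L i := by exact_mod_cast hLpos i
      have h1 : (1:ℝ) ≤ (p:ℝ) / L i := by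
        rw [le_div_iff₀ hLposR]; linarith
      have h2 : ((p / L i : ℕ) : ℝ) ≤ (p:ℝ) / L i := Nat.cast_div_le
      have h3 : (p:ℝ) / L i ≤ (p:ℝ) / (3 * T i) := by
        apply div_le_div_of_nonneg_left (le_of_lt hp0R) (by linarith) (hL3 i)
      have h4 : (N i : ℝ) = ((p / L i : ℕ) : ℝ) + 1 := by
        simp only [hNdef]; push_cast; ring
      rw [h4]
      have h5 : (p:ℝ) / (3 * T i) = (1/3) * ((p:ℝ) / T i) := by
        field_simp
      have h6 : (0:ℝ) ≤ (p:ℝ) / T i := by positivity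
      nlinarith
  have hNprodR : (∏ i, (N i : ℝ)) < p := by
    have h1 : (∏ i, (N i : ℝ)) ≤ ∏ i, (p:ℝ) / T i := by
      apply Finset.prod_le_prod
      · intro i _; positivity
      · intro i _; exact hNle i
    have h2 : ∏ i, (p:ℝ) / T i = (p:ℝ)^(d+1) / ∏ i, T i := by
      rw [Finset.prod_div_distrib, Finset.prod_const, Finset.card_univ,
        Fintype.card_fin]
    have hTprodpos : (0:ℝ) < ∏ i, T i := Finset.prod_pos (fun i _ => hTpos i)
    have h3 : (p:ℝ)^(d+1) / ∏ i, T i < p := by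
      rw [div_lt_iff₀ hTprodpos]
      calc (p:ℝ)^(d+1) = p * p^d := by ring
        _ < p * ∏ i, T i := by
            apply mul_lt_mul_of_pos_left hprod hp0R
    linarith
  have hNprod : (∏ i, N i) < p := by
    rw [← Nat.cast_prod] at hNprodR
    exact_mod_cast hNprodR
  -- the residues
  have hres : ∀ (t : Fin p) (i : Fin (d+1)),
      ((a i * (t.val : ℤ)) % (p:ℤ)).toNat / L i < N i := by
    intro t i
    have h1 : ((a i * (t.val : ℤ)) % (p:ℤ)).toNat ≤ p := by
      have := Int.emod_lt_of_pos (a i * (t.val : ℤ)) (by exact_mod_cast hp0 : (0:ℤ) < p)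
      omega
    calc ((a i * (t.val : ℤ)) % (p:ℤ)).toNat / L i ≤ p / L i :=
          Nat.div_le_div_right h1
      _ < N i := Nat.lt_succ_self _
  have hcard : Fintype.card (∀ i, Fin (N i)) < Fintype.card (Fin p) := by
    simpa [Fintype.card_pi] using hNprod
  obtain ⟨t1, t2, hne, heq⟩ := Fintype.exists_ne_map_eq_of_card_lt
    (fun (t : Fin p) => fun i =>
      (⟨((a i * (t.val : ℤ)) % (p:ℤ)).toNat / L i, hres t i⟩ : Fin (N i))) hcard
  obtain ⟨s1, s2, hlt, hq⟩ : ∃ s1 s2 : Fin p, s2 < s1 ∧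
      ∀ i, ((a i * (s1.val : ℤ)) % (p:ℤ)).toNat / L i
          = ((a i * (s2.val : ℤ)) % (p:ℤ)).toNat / L i := by
    rcases hne.lt_or_gt with h | h
    · exact ⟨t2, t1, h, fun i => by
        have := congrFun heq i
        simp only [Fin.mk.injEq] at this
        omega⟩
    · exact ⟨t1, t2, h, fun i => by
        have := congrFun heq i
        simp only [Fin.mk.injEq] at this
        omega⟩
  have hlt' : (s2.val : ℕ) < s1.val := hlt
  have hs1 : s1.val < p := s1.isLt
  refine ⟨(s1.val : ℤ) - (s2.val : ℤ), ?_, ?_⟩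
  · -- gcd
    have hcast : (s1.val : ℤ) - (s2.val : ℤ) = ((s1.val - s2.val : ℕ) : ℤ) := by
      omega
    rw [hcast, Int.gcd_natCast_natCast]
    have hndvd : ¬ p ∣ (s1.val - s2.val) := by
      intro hdvd
      have := Nat.le_of_dvd (by omega) hdvd
      omega
    exact Nat.coprime_comm.mp (hp.coprime_iff_not_dvd.mpr hndvd)
  · intro i
    set x1 : ℤ := a i * (s1.val : ℤ) with hx1
    set x2 : ℤ := a i * (s2.val : ℤ) with hx2
    have hpz : (0:ℤ) < p := by exact_mod_cast hp0
    refine ⟨x1 / p - x2 / p, ?_⟩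
    have e1 := Int.mul_ediv_add_emod x1 (p:ℤ)
    have e2 := Int.mul_ediv_add_emod x2 (p:ℤ)
    have hr1 : 0 ≤ x1 % p := Int.emod_nonneg _ (by omega)
    have hr2 : 0 ≤ x2 % p := Int.emod_nonneg _ (by omega)
    -- key identity
    have hid : a i * ((s1.val : ℤ) - (s2.val : ℤ)) - (x1 / p - x2 / p) * p
        = x1 % p - x2 % p := by
      have : a i * ((s1.val : ℤ) - (s2.val : ℤ)) = x1 - x2 := by
        rw [hx1, hx2]; ring
      rw [this]
      linarith [e1, e2]
    -- same box implies small difference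
    have hbox : |x1 % p - x2 % p| < (L i : ℤ) := by
      set m1 : ℕ := (x1 % p).toNat with hm1
      set m2 : ℕ := (x2 % p).toNat with hm2
      have hqi : m1 / L i = m2 / L i := hq i
      have d1 := Nat.div_add_mod m1 (L i)
      have d2 := Nat.div_add_mod m2 (L i)
      have mo1 : m1 % L i < L i := Nat.mod_lt _ (hLpos i)
      have mo2 : m2 % L i < L i := Nat.mod_lt _ (hLpos i)
      have hP : L i * (m2 / L i) + m1 % L i = m1 := by rw [← hqi]; exact d1
      have hx1m : x1 % p = (m1 : ℤ) := by omega
      have hx2m : x2 % p = (m2 : ℤ) := by omega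
      rw [hx1m, hx2m]
      -- generalize the common product
      set P : ℕ := L i * (m2 / L i) with hPdef
      have hm1e : m1 = P + m1 % L i := by omega
      have hm2e : m2 = P + m2 % L i := by omega
      rw [abs_lt]
      omega
    rw [hid]
    have hLR : ((L i : ℤ) : ℝ) ≤ 4 * T i := by exact_mod_cast hLle i
    have : ((|x1 % p - x2 % p| : ℤ) : ℝ) < ((L i : ℤ) : ℝ) := by
      exact_mod_cast hbox
    linarith
end

section
/- For every integer d ≥ 1 there exists a constant C = C(d) > 0 such that for every prime p, every polynomial f ∈ F_p[X] of exact degree d, all integers 1 ≤ U, V < p, every convex set 𝔠 ⊆ [1,U] × [1,V] of integer pairs, and all complex weights α_u with |α_u| ≤ 1, one has |Σ_{(u,v) ∈ 𝔠, f(u) ≠ 0} α_u · e_p(v · f(u)^{-1})| ≤ C p · log p. -/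
open Finset Polynomial

/-- The standard additive character `e_p(x) = exp(2πi x / p)` of `ZMod p`. -/
noncomputable def ep (p : ℕ) (x : ZMod p) : ℂ :=
  Complex.exp (2 * Real.pi * Complex.I * (x.val : ℂ) / p)

/-- A finite set of pairs of positive integers is convex if it is the intersection
of a convex subset of `ℝ²` with the integer lattice. -/
def IsConvexIntSet (c : Finset (ℕ × ℕ)) : Prop :=
  ∃ S : Set (ℝ × ℝ), Convex ℝ S ∧ ∀ q : ℕ × ℕ, q ∈ c ↔ ((q.1 : ℝ), (q.2 : ℝ)) ∈ S


lemma abs_exp_theta (θ : ℝ) :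
    ‖Complex.exp (θ * Complex.I) - 1‖ = 2 * |Real.sin (θ / 2)| := by
  rw [Complex.exp_mul_I]
  have h1 : ‖Complex.cos θ + Complex.sin θ * Complex.I - 1‖
      = Real.sqrt ((Real.cos θ - 1) ^ 2 + Real.sin θ ^ 2) := by
    rw [← Complex.ofReal_sin, ← Complex.ofReal_cos, Complex.norm_def, Complex.normSq_apply]
    simp [Complex.add_re, Complex.add_im, Complex.cos_ofReal_re, Complex.sin_ofReal_re]
    ring_nf
  rw [h1]
  have h2 : (Real.cos θ - 1) ^ 2 + Real.sin θ ^ 2 = (2 * |Real.sin (θ / 2)|) ^ 2 := by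
    have hs := Real.sin_sq_eq_half_sub (θ / 2)
    rw [show 2 * (θ / 2) = θ by ring] at hs
    have hpyth := Real.sin_sq_add_cos_sq θ
    have habs : |Real.sin (θ / 2)| ^ 2 = Real.sin (θ / 2) ^ 2 := sq_abs _
    nlinarith [hs, hpyth, habs]
  rw [h2, Real.sqrt_sq (by positivity)]

lemma geom_bound (z : ℂ) (hz : z ≠ 1) (hz1 : ‖z‖ = 1) (A B : ℕ) :
    ‖∑ v ∈ Finset.Icc A B, z ^ v‖ ≤ 2 / ‖z - 1‖ := by
  have hzsub : z - 1 ≠ 0 := sub_ne_zero.mpr hz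
  have hd : 0 < ‖z - 1‖ := by
    simpa [norm_pos_iff] using hzsub
  have key : ∀ n : ℕ, ‖∑ i ∈ Finset.range n, z ^ i‖ ≤ 2 / ‖z - 1‖ := by
    intro n
    rw [geom_sum_eq hz n, norm_div]
    gcongr
    calc ‖z ^ n - 1‖ ≤ ‖z ^ n‖ + 1 := by
          simpa using (norm_sub_le (z ^ n) 1)
      _ ≤ 2 := by rw [norm_pow, hz1]; norm_num
  rcases le_or_gt A B with hAB | hAB
  · rw [← Finset.Ico_add_one_right_eq_Icc, Finset.sum_Ico_eq_sum_range]
    have : ∑ i ∈ Finset.range (B + 1 - A), z ^ (A + i)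
        = z ^ A * ∑ i ∈ Finset.range (B + 1 - A), z ^ i := by
      rw [Finset.mul_sum]; congr 1; ext i; rw [pow_add]
    rw [this, norm_mul, norm_pow, hz1, one_pow, one_mul]
    exact key _
  · rw [Finset.Icc_eq_empty (by omega)]
    simp [le_of_lt (by positivity : (0:ℝ) < 2 / ‖z - 1‖)]

noncomputable def zt (p : ℕ) : ℂ := Complex.exp (2 * Real.pi * Complex.I / p)

lemma zt_pow_p (p : ℕ) (hp : p ≠ 0) : zt p ^ p = 1 := by
  rw [zt, ← Complex.exp_nat_mul]
  rw [show (p : ℂ) * (2 * Real.pi * Complex.I / p) = 2 * Real.pi * Complex.I by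
    rw [mul_div_assoc']; exact mul_div_cancel_left₀ _ (Nat.cast_ne_zero.mpr hp)]
  exact Complex.exp_two_pi_mul_I

lemma zt_pow_mod (p n : ℕ) (hp : p ≠ 0) : zt p ^ n = zt p ^ (n % p) := by
  conv_lhs => rw [← Nat.div_add_mod n p]
  rw [pow_add, pow_mul, zt_pow_p p hp, one_pow, one_mul]

lemma zt_abs (p : ℕ) : ‖zt p‖ = 1 := by
  rw [zt, Complex.norm_exp]
  norm_num

lemma zt_pow_ne_one (p m : ℕ) (hp : p ≠ 0) (hm1 : 1 ≤ m) (hm : m < p) : zt p ^ m ≠ 1 := by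
  have := Complex.isPrimitiveRoot_exp p hp
  exact this.pow_ne_one_of_pos_of_lt (by omega) hm

lemma zt_abs_pow_sub_one (p m : ℕ) (hp : p ≠ 0) (hm1 : 1 ≤ m) (hm : m < p) :
    4 * ((min m (p - m) : ℕ) : ℝ) / p ≤ ‖zt p ^ m - 1‖ := by
  have hp' : (0:ℝ) < p := by positivity
  have h1 : zt p ^ m = Complex.exp ((2 * Real.pi * m / p : ℝ) * Complex.I) := by
    rw [zt, ← Complex.exp_nat_mul]
    congr 1
    push_cast
    field_simp
  rw [h1, abs_exp_theta]
  set k : ℕ := min m (p - m) with hk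
  have hk1 : 1 ≤ k := by omega
  have hk2 : 2 * k ≤ p := by omega
  have hsin : Real.sin (2 * Real.pi * m / p / 2) = Real.sin (Real.pi * k / p) := by
    rcases min_cases m (p - m) with ⟨h, _⟩ | ⟨h, _⟩
    · rw [hk, h]; ring_nf
    · rw [hk, h]
      have : Real.pi * (p - m : ℕ) / p = Real.pi - Real.pi * m / p := by
        have : ((p - m : ℕ) : ℝ) = (p : ℝ) - m := by
          push_cast [Nat.cast_sub (le_of_lt hm)]; ring
        rw [this]; field_simp
      rw [this, Real.sin_pi_sub]; ring_nf
  rw [hsin]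
  have hx0 : 0 ≤ Real.pi * k / p := by positivity
  have hx2 : Real.pi * k / p ≤ Real.pi / 2 := by
    rw [div_le_div_iff₀ hp' (by norm_num)]
    have h2 : ((2 * k : ℕ):ℝ) ≤ p := Nat.cast_le.mpr hk2
    push_cast at h2
    nlinarith [Real.pi_pos]
  have hges := Real.mul_le_sin hx0 hx2
  have : (2:ℝ) / Real.pi * (Real.pi * k / p) = 2 * k / p := by
    field_simp
  rw [this] at hges
  have habs : 2 * (k:ℝ) / p ≤ |Real.sin (Real.pi * k / p)| := hges.trans (le_abs_self _)
  calc 4 * (k : ℝ) / p = 2 * (2 * k / p) := by ring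
    _ ≤ 2 * |Real.sin (Real.pi * k / p)| := by linarith

lemma ep_eq_zt_pow (p : ℕ) (x : ZMod p) : ep p x = zt p ^ x.val := by
  rw [ep, zt, ← Complex.exp_nat_mul]
  congr 1
  ring

lemma ep_mul_eq (p : ℕ) [NeZero p] (v : ℕ) (a : ZMod p) :
    ep p ((v : ZMod p) * a) = zt p ^ (v * a.val) := by
  rw [ep_eq_zt_pow]
  have hval : ((v : ZMod p) * a).val = (v * a.val) % p := by
    rw [ZMod.val_mul, ZMod.val_natCast, Nat.mod_mul_mod]
  rw [hval, ← zt_pow_mod p _ (NeZero.ne p)]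

lemma inner_sum_bound (p m : ℕ) (hp : p ≠ 0) (hm1 : 1 ≤ m) (hm : m < p) (A B : ℕ) :
    ‖∑ v ∈ Finset.Icc A B, zt p ^ (v * m)‖
      ≤ (p:ℝ)/2 * (1/m + 1/((p - m : ℕ) : ℝ)) := by
  have h1 : ∀ v : ℕ, zt p ^ (v * m) = (zt p ^ m) ^ v := by
    intro v; rw [← pow_mul, mul_comm]
  simp_rw [h1]
  have h2 := geom_bound (zt p ^ m) (zt_pow_ne_one p m hp hm1 hm)
    (by rw [norm_pow, zt_abs, one_pow]) A B
  refine h2.trans ?_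
  have h3 := zt_abs_pow_sub_one p m hp hm1 hm
  set k : ℕ := min m (p - m) with hk
  have hk1 : 1 ≤ k := by omega
  have hkpos : (0:ℝ) < 4 * (k:ℝ) / p := by
    have : (0:ℝ) < (k:ℝ) := by exact_mod_cast hk1
    positivity
  have h4 : 2 / ‖zt p ^ m - 1‖ ≤ 2 / (4 * (k:ℝ) / p) := by
    gcongr
  refine h4.trans ?_
  have h5 : 2 / (4 * (k:ℝ) / p) = (p:ℝ) / 2 * (1 / k) := by
    field_simp
    ring
  rw [h5]
  gcongr
  have hmpos : (0:ℝ) < (m:ℝ) := by exact_mod_cast hm1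
  have hpmpos : (0:ℝ) < ((p - m : ℕ):ℝ) := by
    have : 1 ≤ p - m := by omega
    exact_mod_cast Nat.lt_of_lt_of_le Nat.zero_lt_one this
  rcases min_cases m (p - m) with ⟨h, _⟩ | ⟨h, _⟩
  · rw [hk, h]
    have : (0:ℝ) ≤ 1 / ((p - m : ℕ):ℝ) := by positivity
    linarith
  · rw [hk, h]
    have : (0:ℝ) ≤ 1 / (m:ℝ) := by positivity
    linarith

lemma convex_between (c : Finset (ℕ × ℕ)) (hconv : IsConvexIntSet c) (u v1 v2 v : ℕ)
    (h1 : (u, v1) ∈ c) (h2 : (u, v2) ∈ c) (hle1 : v1 ≤ v) (hle2 : v ≤ v2) :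
    (u, v) ∈ c := by
  obtain ⟨S, hS, hiff⟩ := hconv
  rcases eq_or_lt_of_le (hle1.trans hle2) with heq | hlt
  · obtain rfl : v = v1 := by omega
    exact h1
  · have hP1 : ((u:ℝ), (v1:ℝ)) ∈ S := (hiff (u, v1)).mp h1
    have hP2 : ((u:ℝ), (v2:ℝ)) ∈ S := (hiff (u, v2)).mp h2
    have hne : (v2:ℝ) - v1 ≠ 0 := by
      have : (v1:ℝ) < v2 := by exact_mod_cast hlt
      linarith
    set t : ℝ := ((v:ℝ) - v1) / ((v2:ℝ) - v1) with ht
    have hv1v2 : (v1:ℝ) < (v2:ℝ) := by exact_mod_cast hlt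
    have ht0 : 0 ≤ t := by
      apply div_nonneg
      · have : (v1:ℝ) ≤ v := by exact_mod_cast hle1
        linarith
      · linarith
    have ht1 : t ≤ 1 := by
      rw [ht, div_le_one (by linarith)]
      have : (v:ℝ) ≤ v2 := by exact_mod_cast hle2
      linarith
    have hmem := hS hP1 hP2 (by linarith : (0:ℝ) ≤ 1 - t) ht0 (by ring)
    have heqpt : (1 - t) • ((u:ℝ), (v1:ℝ)) + t • ((u:ℝ), (v2:ℝ)) = ((u:ℝ), (v:ℝ)) := by
      have hx : (1 - t) * (u:ℝ) + t * u = u := by ring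
      have hy : (1 - t) * (v1:ℝ) + t * (v2:ℝ) = v := by
        rw [ht]; field_simp; ring
      simp only [Prod.smul_mk, smul_eq_mul, Prod.mk_add_mk, hx, hy]
    rw [heqpt] at hmem
    exact (hiff (u, v)).mpr hmem

lemma mem_image_snd (c : Finset (ℕ × ℕ)) (u v : ℕ) :
    v ∈ (c.filter (fun q => q.1 = u)).image Prod.snd ↔ (u, v) ∈ c := by
  simp only [Finset.mem_image, Finset.mem_filter]
  constructor
  · rintro ⟨⟨a, b⟩, ⟨hm, h1⟩, h2⟩
    simp only at h1 h2
    subst h1; subst h2; exact hm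
  · intro h
    exact ⟨(u, v), ⟨h, rfl⟩, rfl⟩

lemma interval_of_between (W : Finset ℕ)
    (hW : ∀ v1 ∈ W, ∀ v2 ∈ W, ∀ v : ℕ, v1 ≤ v → v ≤ v2 → v ∈ W) (hne : W.Nonempty) :
    W = Finset.Icc (W.min' hne) (W.max' hne) := by
  ext v
  rw [Finset.mem_Icc]
  constructor
  · intro hv
    exact ⟨W.min'_le v hv, W.le_max' v hv⟩
  · rintro ⟨hA, hB⟩
    exact hW _ (W.min'_mem hne) _ (W.max'_mem hne) v hA hB

lemma fiber_card (p d : ℕ) (hp : p.Prime) (f : Polynomial (ZMod p)) (hf : f.degree = d)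
    (hd : 1 ≤ d) (U : ℕ) (hU : U < p) (b : ZMod p) (hb : b ≠ 0) :
    ((Finset.Icc 1 U).filter (fun u : ℕ => (f.eval (u : ZMod p))⁻¹ = b)).card ≤ d := by
  haveI := Fact.mk hp
  set g : Polynomial (ZMod p) := f - Polynomial.C b⁻¹ with hg
  have hdegf : 0 < f.degree := by
    rw [hf]
    exact_mod_cast Nat.pos_of_ne_zero (by omega)
  have hdegg : g.degree = d := by rw [hg, Polynomial.degree_sub_C hdegf, hf]
  have hgne : g ≠ 0 := by
    intro h
    rw [h, Polynomial.degree_zero] at hdegg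
    simp at hdegg
  have hinj : Set.InjOn (fun u : ℕ => (u : ZMod p))
      ((Finset.Icc 1 U).filter (fun u : ℕ => (f.eval (u : ZMod p))⁻¹ = b)) := by
    intro x hx y hy hxy
    simp only [Finset.coe_filter, Set.mem_setOf_eq, Finset.mem_Icc] at hx hy
    have hxp : x < p := by omega
    have hyp : y < p := by omega
    have := congrArg ZMod.val hxy
    simpa [ZMod.val_natCast_of_lt hxp, ZMod.val_natCast_of_lt hyp] using this
  have hmaps : ∀ u ∈ (Finset.Icc 1 U).filter (fun u : ℕ => (f.eval (u : ZMod p))⁻¹ = b),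
      (u : ZMod p) ∈ g.roots.toFinset := by
    intro u hu
    rw [Finset.mem_filter] at hu
    have hinv := hu.2
    have hne0 : f.eval (u : ZMod p) ≠ 0 := by
      intro h; rw [h] at hinv; simp at hinv; exact hb hinv.symm
    have heval : f.eval (u : ZMod p) = b⁻¹ := by
      rw [← hinv, inv_inv]
    rw [Multiset.mem_toFinset, Polynomial.mem_roots hgne]
    simp [hg, Polynomial.IsRoot, heval]
  calc ((Finset.Icc 1 U).filter (fun u : ℕ => (f.eval (u : ZMod p))⁻¹ = b)).card
      ≤ g.roots.toFinset.card := Finset.card_le_card_of_injOn _ hmaps hinj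
    _ ≤ Multiset.card g.roots := g.roots.toFinset_card_le
    _ ≤ g.natDegree := Polynomial.card_roots' g
    _ = d := Polynomial.natDegree_eq_of_degree_eq_some hdegg

lemma sum_Icc_inv_le (n : ℕ) : ∑ m ∈ Finset.Icc 1 n, (1:ℝ)/m ≤ 1 + Real.log n := by
  have h := harmonic_le_one_add_log n
  rw [harmonic_eq_sum_Icc] at h
  push_cast at h
  simpa [one_div] using h

theorem stmt_17 (d : ℕ) (hd : 1 ≤ d) :
    ∃ C : ℝ, 0 < C ∧ ∀ p : ℕ, p.Prime →
      ∀ f : Polynomial (ZMod p), f.degree = d →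
      ∀ U V : ℕ, 1 ≤ U → U < p → 1 ≤ V → V < p →
      ∀ c : Finset (ℕ × ℕ),
        (∀ q ∈ c, 1 ≤ q.1 ∧ q.1 ≤ U ∧ 1 ≤ q.2 ∧ q.2 ≤ V) →
        IsConvexIntSet c →
      ∀ α : ℕ → ℂ, (∀ u, ‖α u‖ ≤ 1) →
      ‖∑ q ∈ c.filter fun q => f.eval (q.1 : ZMod p) ≠ 0,
          α q.1 * ep p ((q.2 : ZMod p) * (f.eval (q.1 : ZMod p))⁻¹)‖
        ≤ C * (p : ℝ) * Real.log p := by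
  have hlog2 : (0:ℝ) < Real.log 2 := Real.log_pos one_lt_two
  have hdpos : (0:ℝ) < d := by exact_mod_cast hd
  refine ⟨(d:ℝ) * (1 + (Real.log 2)⁻¹), by positivity, ?_⟩
  intro p hp f hf U V hU1 hUp hV1 hVp c hc hconv α hα
  haveI := Fact.mk hp
  have hp0 : p ≠ 0 := hp.ne_zero
  have hppos : (0:ℝ) < p := by exact_mod_cast hp.pos
  set G : ZMod p → ℝ := fun b => (p:ℝ)/2 * (1/(b.val:ℝ) + 1/((p - b.val : ℕ):ℝ)) with hG
  have hGnonneg : ∀ b, 0 ≤ G b := by intro b; rw [hG]; positivity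
  -- Step A : split by first coordinate
  have hmaps : ∀ q ∈ c.filter (fun q => f.eval (q.1 : ZMod p) ≠ 0), q.1 ∈ Finset.Icc 1 U := by
    intro q hq
    rw [Finset.mem_filter] at hq
    have := hc q hq.1
    rw [Finset.mem_Icc]
    exact ⟨this.1, this.2.1⟩
  rw [← Finset.sum_fiberwise_of_maps_to hmaps
    (fun q => α q.1 * ep p ((q.2 : ZMod p) * (f.eval (q.1 : ZMod p))⁻¹))]
  -- Step B : per-u bound
  have hub : ∀ u ∈ Finset.Icc 1 U,
      ‖∑ q ∈ (c.filter (fun q => f.eval (q.1 : ZMod p) ≠ 0)).filter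
          (fun q => q.1 = u),
          α q.1 * ep p ((q.2 : ZMod p) * (f.eval (q.1 : ZMod p))⁻¹)‖
        ≤ if f.eval (u : ZMod p) ≠ 0 then G ((f.eval (u : ZMod p))⁻¹) else 0 := by
    intro u hu
    by_cases h0 : f.eval (u : ZMod p) = 0
    · have hempty : (c.filter (fun q => f.eval (q.1 : ZMod p) ≠ 0)).filter (fun q => q.1 = u)
          = ∅ := by
        rw [Finset.eq_empty_iff_forall_notMem]
        intro q hq
        simp only [Finset.mem_filter] at hq
        exact hq.1.2 (by rw [hq.2]; exact h0)
      rw [hempty]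
      simp [h0]
    · rw [if_pos h0]
      have hff : (c.filter (fun q => f.eval (q.1 : ZMod p) ≠ 0)).filter (fun q => q.1 = u)
          = c.filter (fun q => q.1 = u) := by
        ext q
        simp only [Finset.mem_filter, and_assoc]
        constructor
        · rintro ⟨h1, _, h3⟩; exact ⟨h1, h3⟩
        · rintro ⟨h1, h3⟩; exact ⟨h1, by rw [h3]; exact h0, h3⟩
      rw [hff]
      set b : ZMod p := (f.eval (u : ZMod p))⁻¹ with hb
      have hbne : b ≠ 0 := inv_ne_zero h0
      have hm1 : 1 ≤ b.val := Nat.one_le_iff_ne_zero.mpr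
        (fun h => hbne ((ZMod.val_eq_zero b).mp h))
      have hmp : b.val < p := ZMod.val_lt b
      have hterm : ∀ q ∈ c.filter (fun q => q.1 = u),
          α q.1 * ep p ((q.2 : ZMod p) * (f.eval (q.1 : ZMod p))⁻¹)
            = α u * zt p ^ (q.2 * b.val) := by
        intro q hq
        rw [Finset.mem_filter] at hq
        rw [hq.2, ← hb, ep_mul_eq p q.2 b]
      rw [Finset.sum_congr rfl hterm, ← Finset.mul_sum, norm_mul]
      have hinj2 : ∀ x ∈ c.filter (fun q => q.1 = u), ∀ y ∈ c.filter (fun q => q.1 = u),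
          x.2 = y.2 → x = y := by
        intro x hx y hy hxy
        rw [Finset.mem_filter] at hx hy
        exact Prod.ext (hx.2.trans hy.2.symm) hxy
      rw [show (∑ q ∈ c.filter (fun q => q.1 = u), zt p ^ (q.2 * b.val))
          = ∑ v ∈ (c.filter (fun q => q.1 = u)).image Prod.snd, zt p ^ (v * b.val) from
        (Finset.sum_image (f := fun v : ℕ => zt p ^ (v * b.val)) (g := Prod.snd) hinj2).symm]
      rcases Finset.eq_empty_or_nonempty ((c.filter (fun q => q.1 = u)).image Prod.snd)
        with he | hne
      · rw [he]
        simpa using hGnonneg b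
      · have hbetween : ∀ v1 ∈ (c.filter (fun q => q.1 = u)).image Prod.snd,
            ∀ v2 ∈ (c.filter (fun q => q.1 = u)).image Prod.snd,
            ∀ v : ℕ, v1 ≤ v → v ≤ v2 → v ∈ (c.filter (fun q => q.1 = u)).image Prod.snd := by
          intro v1 h1 v2 h2 v hv1 hv2
          exact (mem_image_snd c u v).mpr (convex_between c hconv u v1 v2 v
            ((mem_image_snd c u v1).mp h1) ((mem_image_snd c u v2).mp h2) hv1 hv2)
        rw [interval_of_between _ hbetween hne]
        calc ‖α u‖ * ‖∑ v ∈ Finset.Icc _ _, zt p ^ (v * b.val)‖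
            ≤ 1 * ((p:ℝ)/2 * (1/(b.val:ℝ) + 1/((p - b.val : ℕ):ℝ))) :=
              mul_le_mul (hα u) (inner_sum_bound p b.val hp0 hm1 hmp _ _)
                (norm_nonneg _) zero_le_one
          _ = G b := by rw [one_mul]
  -- Step C : sum the bounds
  refine le_trans ((norm_sum_le _ _).trans (Finset.sum_le_sum hub)) ?_
  rw [← Finset.sum_filter]
  set A := (Finset.Icc 1 U).filter (fun u : ℕ => f.eval (u : ZMod p) ≠ 0) with hA
  -- regroup by value of the inverse
  have hmaps2 : ∀ u ∈ A, (f.eval (u : ZMod p))⁻¹ ∈ (Finset.univ : Finset (ZMod p)) :=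
    fun u _ => Finset.mem_univ _
  rw [← Finset.sum_fiberwise_of_maps_to hmaps2 (fun u => G ((f.eval (u : ZMod p))⁻¹))]
  have hbbound : ∀ b ∈ (Finset.univ : Finset (ZMod p)),
      (∑ u ∈ A.filter (fun u : ℕ => (f.eval (u : ZMod p))⁻¹ = b), G ((f.eval (u : ZMod p))⁻¹))
        ≤ (d:ℝ) * (if b ≠ 0 then G b else 0) := by
    intro b _
    have hcongr : ∀ u ∈ A.filter (fun u : ℕ => (f.eval (u : ZMod p))⁻¹ = b),
        G ((f.eval (u : ZMod p))⁻¹) = G b := by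
      intro u hu
      rw [(Finset.mem_filter.mp hu).2]
    rw [Finset.sum_congr rfl hcongr, Finset.sum_const, nsmul_eq_mul]
    by_cases hb : b = 0
    · have : A.filter (fun u : ℕ => (f.eval (u : ZMod p))⁻¹ = b) = ∅ := by
        rw [Finset.eq_empty_iff_forall_notMem]
        intro u hu
        rw [Finset.mem_filter, hA, Finset.mem_filter] at hu
        exact inv_ne_zero hu.1.2 (hu.2.trans (by rw [hb]))
      rw [this]
      simp [hb]
    · rw [if_pos hb]
      have hsub : A.filter (fun u : ℕ => (f.eval (u : ZMod p))⁻¹ = b)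
          ⊆ (Finset.Icc 1 U).filter (fun u : ℕ => (f.eval (u : ZMod p))⁻¹ = b) := by
        intro x hx
        rw [Finset.mem_filter, hA, Finset.mem_filter] at hx
        rw [Finset.mem_filter]
        exact ⟨hx.1.1, hx.2⟩
      have hcard : ((A.filter (fun u : ℕ => (f.eval (u : ZMod p))⁻¹ = b)).card : ℝ) ≤ (d:ℝ) := by
        exact_mod_cast le_trans (Finset.card_le_card hsub) (fiber_card p d hp f hf hd U hUp b hb)
      exact mul_le_mul_of_nonneg_right hcard (hGnonneg b)
  refine le_trans (Finset.sum_le_sum hbbound) ?_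
  rw [← Finset.mul_sum, ← Finset.sum_filter]
  -- identify the sum over nonzero b with a sum over 1 ≤ m ≤ p - 1
  have hbij : ∑ b ∈ Finset.univ.filter (fun b : ZMod p => b ≠ 0), G b
      = ∑ m ∈ Finset.Icc 1 (p-1), (p:ℝ)/2 * (1/(m:ℝ) + 1/((p - m : ℕ):ℝ)) := by
    apply Finset.sum_nbij' (i := fun b : ZMod p => b.val) (j := fun m : ℕ => (m : ZMod p))
    · intro b hb
      rw [Finset.mem_filter] at hb
      rw [Finset.mem_Icc]
      have h1 : 1 ≤ b.val := Nat.one_le_iff_ne_zero.mpr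
        (fun h => hb.2 ((ZMod.val_eq_zero b).mp h))
      have h2 : b.val < p := ZMod.val_lt b
      omega
    · intro m hm
      rw [Finset.mem_Icc] at hm
      rw [Finset.mem_filter]
      refine ⟨Finset.mem_univ _, ?_⟩
      rw [Ne, ZMod.natCast_eq_zero_iff]
      intro hdvd
      have := Nat.le_of_dvd (by omega) hdvd
      omega
    · intro b hb
      exact ZMod.natCast_rightInverse b
    · intro m hm
      rw [Finset.mem_Icc] at hm
      exact ZMod.val_natCast_of_lt (by omega)
    · intro b hb
      rfl
  rw [hbij]
  -- evaluate / bound the harmonic-type sum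
  have hsplit2 : ∑ m ∈ Finset.Icc 1 (p-1), (p:ℝ)/2 * (1/(m:ℝ) + 1/((p - m : ℕ):ℝ))
      = (p:ℝ)/2 * ((∑ m ∈ Finset.Icc 1 (p-1), 1/(m:ℝ))
        + ∑ m ∈ Finset.Icc 1 (p-1), 1/((p - m : ℕ):ℝ)) := by
    rw [mul_add, Finset.mul_sum, Finset.mul_sum, ← Finset.sum_add_distrib]
    apply Finset.sum_congr rfl
    intros
    ring
  have hreflect : ∑ m ∈ Finset.Icc 1 (p-1), 1/((p - m : ℕ):ℝ)
      = ∑ m ∈ Finset.Icc 1 (p-1), 1/(m:ℝ) := by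
    apply Finset.sum_nbij' (i := fun m : ℕ => p - m) (j := fun m : ℕ => p - m)
    · intro m hm; rw [Finset.mem_Icc] at *; omega
    · intro m hm; rw [Finset.mem_Icc] at *; omega
    · intro m hm; rw [Finset.mem_Icc] at hm; omega
    · intro m hm; rw [Finset.mem_Icc] at hm; omega
    · intro m hm; rfl
  have hharm : ∑ m ∈ Finset.Icc 1 (p-1), 1/(m:ℝ) ≤ 1 + Real.log p := by
    refine (sum_Icc_inv_le (p-1)).trans ?_
    have h1 : ((p-1 : ℕ):ℝ) ≤ (p:ℝ) := by
      have : (p-1 : ℕ) ≤ p := Nat.sub_le p 1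
      exact_mod_cast this
    rcases Nat.eq_or_lt_of_le hp.two_le with h | h
    · have hlog : Real.log ((p-1:ℕ):ℝ) ≤ Real.log p := by
        apply Real.log_le_log _ h1
        have : 1 ≤ p - 1 := by omega
        exact_mod_cast this
      linarith
    · have hlog : Real.log ((p-1:ℕ):ℝ) ≤ Real.log p := by
        apply Real.log_le_log _ h1
        have : 1 ≤ p - 1 := by omega
        exact_mod_cast this
      linarith
  rw [hsplit2, hreflect]
  have hlogp : Real.log 2 ≤ Real.log p := by
    apply Real.log_le_log (by norm_num)
    exact_mod_cast hp.two_le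
  have hlogppos : (0:ℝ) < Real.log p := lt_of_lt_of_le hlog2 hlogp
  have hfinal : (1:ℝ) + Real.log p ≤ (1 + (Real.log 2)⁻¹) * Real.log p := by
    have h1 : (1:ℝ) ≤ (Real.log 2)⁻¹ * Real.log p := by
      rw [← inv_mul_cancel₀ (ne_of_gt hlog2)]
      exact mul_le_mul_of_nonneg_left hlogp (le_of_lt (inv_pos.mpr hlog2))
    nlinarith
  calc (d:ℝ) * ((p:ℝ)/2 * ((∑ m ∈ Finset.Icc 1 (p-1), 1/(m:ℝ))
          + ∑ m ∈ Finset.Icc 1 (p-1), 1/(m:ℝ)))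
      = (d:ℝ) * (p:ℝ) * (∑ m ∈ Finset.Icc 1 (p-1), 1/(m:ℝ)) := by ring
    _ ≤ (d:ℝ) * (p:ℝ) * (1 + Real.log p) := by
        apply mul_le_mul_of_nonneg_left hharm (by positivity)
    _ ≤ (d:ℝ) * (p:ℝ) * ((1 + (Real.log 2)⁻¹) * Real.log p) := by
        apply mul_le_mul_of_nonneg_left hfinal (by positivity)
    _ = (d:ℝ) * (1 + (Real.log 2)⁻¹) * (p:ℝ) * Real.log p := by ring
end
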